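/- (Böhning's bound) For any probability vector p ∈ Δ^{K−1} (p_k ≥ 0, Σ_k p_k = 1), the matrix V(p) = Diag(p) − p pᵀ satisfies V(p) ⪯ (1/2)[I_K − (1/K) 1 1ᵀ] in the Loewner order. -/

import Mathlib

/-!
The quadratic form of `Diag(p) - p pᵀ` is the variance of `x` under the weights `p`, which does
not change when `x` is shifted by a constant, while that of `½ (I - 1 1ᵀ / K)` is half the
squared norm of the centred vector. So it suffices that `Var_p(y) ≤ ½ ∑ yᵢ²`, which follows
from Popoviciu's inequality `Var_p(y) ≤ ((max y - min y) / 2)² ≤ (max y² + min y²) / 2`.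
-/

open Matrix Finset

section

variable {ι : Type*} [Fintype ι]

noncomputable def weightedVar (p x : ι → ℝ) : ℝ :=
  ∑ i, p i * x i ^ 2 - (∑ i, p i * x i) ^ 2

theorem weightedVar_eq_sum_mul_sub_sq {p : ι → ℝ} (hp : ∑ i, p i = 1) (x : ι → ℝ)
    (c : ℝ) :
    weightedVar p x = ∑ i, p i * (x i - c) ^ 2 - (∑ i, p i * x i - c) ^ 2 := by
  have hexpand : ∑ i, p i * (x i - c) ^ 2
      = ∑ i, p i * x i ^ 2 - 2 * c * ∑ i, p i * x i + c ^ 2 * ∑ i, p i := by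
    simp only [mul_sum, ← sum_sub_distrib, ← sum_add_distrib]
    exact sum_congr rfl fun i _ => by ring
  rw [hexpand, hp, weightedVar]
  ring

theorem weightedVar_sub_const {p : ι → ℝ} (hp : ∑ i, p i = 1) (x : ι → ℝ) (c : ℝ) :
    weightedVar p (fun i => x i - c) = weightedVar p x := by
  have hmean : ∑ i, p i * (x i - c) = ∑ i, p i * x i - c := by
    simp only [mul_sub, sum_sub_distrib, ← sum_mul, hp, one_mul]
  rw [weightedVar_eq_sum_mul_sub_sq hp x c, weightedVar, hmean]

theorem weightedVar_le_sq_of_mem_Icc {p : ι → ℝ} (hp0 : ∀ i, 0 ≤ p i) (hp : ∑ i, p i = 1)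
    {x : ι → ℝ} {a b : ℝ} (hx : ∀ i, x i ∈ Set.Icc a b) :
    weightedVar p x ≤ ((b - a) / 2) ^ 2 :=
  calc weightedVar p x ≤ ∑ i, p i * (x i - (a + b) / 2) ^ 2 := by
        rw [weightedVar_eq_sum_mul_sub_sq hp x ((a + b) / 2)]
        exact sub_le_self _ (sq_nonneg _)
    _ ≤ ∑ i, p i * ((b - a) / 2) ^ 2 := by
        refine sum_le_sum fun i _ => mul_le_mul_of_nonneg_left ?_ (hp0 i)
        obtain ⟨hai, hib⟩ := hx i
        exact sq_le_sq' (by linarith) (by linarith)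
    _ = ((b - a) / 2) ^ 2 := by rw [← sum_mul, hp, one_mul]

theorem weightedVar_le_half_sum_sq {p : ι → ℝ} (hp0 : ∀ i, 0 ≤ p i) (hp : ∑ i, p i = 1)
    (x : ι → ℝ) : weightedVar p x ≤ (1 / 2) * ∑ i, x i ^ 2 := by
  classical
  have huniv : (univ : Finset ι).Nonempty := by
    by_contra h
    simp [not_nonempty_iff_eq_empty.mp h] at hp
  obtain ⟨imax, -, himax⟩ := exists_max_image univ x huniv
  obtain ⟨imin, -, himin⟩ := exists_min_image univ x huniv
  have hvar := weightedVar_le_sq_of_mem_Icc hp0 hp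
    (fun i => ⟨himin i (mem_univ i), himax i (mem_univ i)⟩)
  have hsq : 0 ≤ ∑ i, x i ^ 2 := sum_nonneg fun i _ => sq_nonneg (x i)
  rcases eq_or_ne imax imin with heq | hne
  · rw [heq, sub_self] at hvar
    linarith
  · have hpair : x imax ^ 2 + x imin ^ 2 ≤ ∑ i, x i ^ 2 := by
      rw [← sum_pair (f := fun i => x i ^ 2) hne]
      exact sum_le_univ_sum_of_nonneg fun i => sq_nonneg (x i)
    nlinarith [sq_nonneg (x imax + x imin)]

theorem sum_sub_mean_sq (x : ι → ℝ) :
    ∑ i, (x i - (∑ j, x j) / Fintype.card ι) ^ 2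
      = ∑ i, x i ^ 2 - (∑ i, x i) ^ 2 / Fintype.card ι := by
  rcases isEmpty_or_nonempty ι with _ | _
  · simp
  have hn : (Fintype.card ι : ℝ) ≠ 0 := Nat.cast_ne_zero.2 Fintype.card_ne_zero
  simp only [sub_sq, sum_add_distrib, sum_sub_distrib, ← sum_mul, ← mul_sum, sum_const,
    card_univ, nsmul_eq_mul]
  field_simp
  ring

theorem isHermitian_vecMulVec_self {n α : Type*} [CommMagma α] [Star α] [TrivialStar α]
    (a : n → α) : (vecMulVec a a).IsHermitian := by
  rw [IsHermitian, conjTranspose_eq_transpose_of_trivial, transpose_vecMulVec]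

theorem dotProduct_vecMulVec_mulVec {α : Type*} [CommSemiring α] (a b x : ι → α) :
    x ⬝ᵥ (vecMulVec a b *ᵥ x) = (x ⬝ᵥ a) * (b ⬝ᵥ x) := by
  simp [vecMulVec_mulVec, mul_comm]

variable [DecidableEq ι]

theorem dotProduct_diagonal_mulVec {α : Type*} [CommSemiring α] (p x : ι → α) :
    x ⬝ᵥ (diagonal p *ᵥ x) = ∑ i, p i * x i ^ 2 := by
  simp only [dotProduct, mulVec_diagonal]
  exact sum_congr rfl fun i _ => by ring

theorem dotProduct_diagonal_sub_vecMulVec_mulVec (p x : ι → ℝ) :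
    x ⬝ᵥ ((diagonal p - vecMulVec p p) *ᵥ x) = weightedVar p x := by
  rw [sub_mulVec, dotProduct_sub, dotProduct_diagonal_mulVec, dotProduct_vecMulVec_mulVec,
    weightedVar, dotProduct_comm x p, dotProduct, sq]

theorem dotProduct_centering_mulVec (x : ι → ℝ) :
    x ⬝ᵥ ((1 - (1 / (Fintype.card ι : ℝ)) • vecMulVec (fun _ => 1) (fun _ => 1)) *ᵥ x)
      = ∑ i, (x i - (∑ j, x j) / Fintype.card ι) ^ 2 := by
  rw [sum_sub_mean_sq, sub_mulVec, one_mulVec, smul_mulVec, dotProduct_sub, dotProduct_smul,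
    dotProduct_vecMulVec_mulVec]
  simp only [dotProduct, mul_one, one_mul, smul_eq_mul, sq]
  ring

end

/-- Böhning's bound: for a probability vector p,
Diag(p) − p pᵀ ⪯ (1/2)[I − (1/K) 1 1ᵀ] in the Loewner order. -/
theorem bohning_bound
    {K : ℕ} (p : Fin K → ℝ) (hp : ∀ i, 0 ≤ p i) (hsum : ∑ i, p i = 1) :
    ((1 / 2 : ℝ) • ((1 : Matrix (Fin K) (Fin K) ℝ)
        - (1 / (K : ℝ)) • Matrix.vecMulVec (fun _ => (1 : ℝ)) (fun _ => (1 : ℝ)))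
      - (Matrix.diagonal p - Matrix.vecMulVec p p)).PosSemidef := by
  refine posSemidef_iff_dotProduct_mulVec.2 ⟨?_, fun x => ?_⟩
  · refine IsHermitian.sub (IsHermitian.smul ?_ (IsSelfAdjoint.all _))
      ((isHermitian_diagonal p).sub (isHermitian_vecMulVec_self p))
    exact isHermitian_one.sub ((isHermitian_vecMulVec_self _).smul (IsSelfAdjoint.all _))
  · have hcenter := dotProduct_centering_mulVec x
    rw [Fintype.card_fin] at hcenter
    rw [star_trivial, sub_mulVec, dotProduct_sub, smul_mulVec, dotProduct_smul, hcenter,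
      dotProduct_diagonal_sub_vecMulVec_mulVec, ← weightedVar_sub_const hsum x ((∑ i, x i) / K),
      smul_eq_mul, sub_nonneg]
    exact weightedVar_le_half_sum_sq hp hsum _
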